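/- arXiv:2210.08848 — 6 statements merged into one kernel-verified Lean document; each statement's English description precedes it below -/
import Mathlib

section
/- Let z* > 0, C > 0, and let f : (0, ∞) → ℝ be continuous, concave on [z*, ∞) and strictly concave there, with f(z*) = C z*, f(z) ≤ C z for all z > 0, and f(z) < C z for z ∈ (0, z*). Let V(z) = C z for z ∈ (0, z*] and V(z) = f(z) for z ≥ z*. Suppose A ≥ 0 and z̄ > 0 satisfy: A z ≥ V(z) for all z ∈ (0, z̄), and A z̄ = f(z̄) with z̄ ≥ z*. Then A = C and z̄ = z*. -/
/-!
Testing the domination at a point of `(0, z*)` gives `C ≤ A`, and `A z̄ = f z̄ ≤ C z̄` gives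
`A ≤ C`. So the line `z ↦ C z` lies above `f` and touches it at both `z*` and `z̄`; a strictly
concave function can touch a convex majorant at only one point, hence `z̄ = z*`.
-/

theorem StrictConcaveOn.eq_of_eq_of_le_convexOn {E : Type*} [AddCommGroup E] [Module ℝ E]
    {s : Set E} {f g : E → ℝ} (hf : StrictConcaveOn ℝ s f) (hg : ConvexOn ℝ s g)
    (hfg : ∀ z ∈ s, f z ≤ g z) {x y : E} (hx : x ∈ s) (hy : y ∈ s)
    (hfgx : f x = g x) (hfgy : f y = g y) : x = y := by
  by_contra hxy
  have half : (1 / 2 : ℝ) + 1 / 2 = 1 := by norm_num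
  have hf_mid := hf.2 hx hy hxy (by norm_num) (by norm_num) half
  have hg_mid := hg.2 hx hy (by norm_num) (by norm_num) half
  have hfg_mid := hfg _ (hf.1 hx hy (by norm_num) (by norm_num) half)
  simp only [smul_eq_mul, hfgx, hfgy] at hf_mid hg_mid
  linarith

theorem line_dominating_value_touches_at_zstar_general
    (zstar C : ℝ) (hzstar : 0 < zstar)
    (f : ℝ → ℝ)
    (hfstrict : StrictConcaveOn ℝ (Set.Ici zstar) f)
    (heq : f zstar = C * zstar)
    (hle : ∀ z ∈ Set.Ioi (0:ℝ), f z ≤ C * z)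
    (V : ℝ → ℝ)
    (hV1 : ∀ z ∈ Set.Ioc 0 zstar, V z = C * z)
    (A zbar : ℝ)
    (hdom : ∀ z ∈ Set.Ioo 0 zbar, V z ≤ A * z)
    (htouch : A * zbar = f zbar) (hge : zstar ≤ zbar) :
    A = C ∧ zbar = zstar := by
  have hzbar : 0 < zbar := hzstar.trans_le hge
  have hCA : C ≤ A := by
    have hdom_mid := hdom (zstar / 2) ⟨by linarith, by linarith⟩
    rw [hV1 _ ⟨by linarith, by linarith⟩] at hdom_mid
    exact le_of_mul_le_mul_right hdom_mid (by linarith)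
  have hAC : A ≤ C := le_of_mul_le_mul_right (htouch ▸ hle zbar hzbar) hzbar
  obtain rfl : A = C := le_antisymm hAC hCA
  refine ⟨rfl, hfstrict.eq_of_eq_of_le_convexOn ((LinearMap.mul ℝ ℝ A).convexOn (convex_Ici _))
    (fun z hz => hle z (hzstar.trans_le hz)) (Set.mem_Ici.mpr hge) Set.self_mem_Ici
    htouch.symm heq⟩

/-- If the line `z ↦ A z` dominates the stand-alone value
`V(z) = max-type gluing of C z on (0,z*] and the strictly concave f on [z*,∞)`
on `(0, z̄)` and touches `f` at `z̄ ≥ z*`, then `A = C` and `z̄ = z*`. -/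
theorem line_dominating_value_touches_at_zstar
    (zstar C : ℝ) (hzstar : 0 < zstar) (hC : 0 < C)
    (f : ℝ → ℝ)
    (hfcont : ContinuousOn f (Set.Ioi 0))
    (hfconc : ConcaveOn ℝ (Set.Ici zstar) f)
    (hfstrict : StrictConcaveOn ℝ (Set.Ici zstar) f)
    (heq : f zstar = C * zstar)
    (hle : ∀ z ∈ Set.Ioi (0:ℝ), f z ≤ C * z)
    (hlt : ∀ z ∈ Set.Ioo 0 zstar, f z < C * z)
    (V : ℝ → ℝ)
    (hV1 : ∀ z ∈ Set.Ioc 0 zstar, V z = C * z)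
    (hV2 : ∀ z ∈ Set.Ici zstar, V z = f z)
    (A zbar : ℝ) (hA : 0 ≤ A) (hzbar : 0 < zbar)
    (hdom : ∀ z ∈ Set.Ioo 0 zbar, V z ≤ A * z)
    (htouch : A * zbar = f zbar) (hge : zstar ≤ zbar) :
    A = C ∧ zbar = zstar :=
  line_dominating_value_touches_at_zstar_general zstar C hzstar f hfstrict heq hle V hV1 A zbar hdom
    htouch hge
end

section
/- Let C > 0 and let (u_n)_{n≥1} be a sequence of strictly positive reals with u_n → 0 such that u_{n+1}² + C u_{n+1}³ ≥ u_n² − C u_n³ for all n. Then ∑_{n≥1} u_n = ∞. -/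
/-!
Once `C u_n ≤ 1/2`, the recursion implies `1/u_{n+1} ≤ 1/u_n + 2C`. So `1/u_n` grows at most
linearly, and `u_n` dominates a positive multiple of the harmonic series.
-/

open Filter Topology

/-- With `x = C a ≤ 1/2`, the point `c = a / (1 + 2x)` satisfies `c² + C c³ ≤ a² - C a³`, which
after clearing denominators is `0 ≤ 2x (1 + 3x - 2x² - 4x³)`; monotonicity of `t ↦ t² + C t³` then
forces `b ≥ c`. -/
lemma inv_le_inv_add_of_sq_sub_cube_le_sq_add_cube {C a b : ℝ} (hC : 0 ≤ C) (ha : 0 < a)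
    (hb : 0 < b) (hCa : C * a ≤ 1 / 2) (h : a ^ 2 - C * a ^ 3 ≤ b ^ 2 + C * b ^ 3) :
    b⁻¹ ≤ a⁻¹ + 2 * C := by
  have hx : 0 ≤ C * a := mul_nonneg hC ha.le
  have hd : 0 < 1 + 2 * (C * a) := by positivity
  set c := a / (1 + 2 * (C * a)) with hc
  have hc_pos : 0 < c := div_pos ha hd
  have hc_le : c ^ 2 + C * c ^ 3 ≤ a ^ 2 - C * a ^ 3 := by
    have hpoly : 0 ≤ 2 * (C * a) * (1 + 3 * (C * a) - 2 * (C * a) ^ 2 - 4 * (C * a) ^ 3) := by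
      have : (C * a) ^ 2 ≤ 1 / 4 := by nlinarith
      have : (C * a) ^ 3 ≤ 1 / 8 := by nlinarith
      exact mul_nonneg (by positivity) (by nlinarith)
    have hdiff : a ^ 2 - C * a ^ 3 - (c ^ 2 + C * c ^ 3) = a ^ 2 *
        (2 * (C * a) * (1 + 3 * (C * a) - 2 * (C * a) ^ 2 - 4 * (C * a) ^ 3)) /
        (1 + 2 * (C * a)) ^ 3 := by
      rw [hc]; field_simp; ring
    have : 0 ≤ a ^ 2 - C * a ^ 3 - (c ^ 2 + C * c ^ 3) := by
      rw [hdiff]; exact div_nonneg (mul_nonneg (sq_nonneg a) hpoly) (by positivity)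
    linarith
  have hcb : c ≤ b := by
    by_contra! hbc
    have : b ^ 2 + C * b ^ 3 < c ^ 2 + C * c ^ 3 := by
      have h2 : b ^ 2 < c ^ 2 := pow_lt_pow_left₀ hbc hb.le two_ne_zero
      have h3 : b ^ 3 ≤ c ^ 3 := pow_le_pow_left₀ hb.le hbc.le 3
      nlinarith [mul_le_mul_of_nonneg_left h3 hC]
    linarith
  calc b⁻¹ ≤ c⁻¹ := inv_anti₀ hc_pos hcb
    _ = a⁻¹ + 2 * C := by rw [hc, inv_div]; field_simp

section InverseGrowth

variable {u : ℕ → ℝ} {D : ℝ}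

lemma inv_le_inv_zero_add_mul_of_inv_succ_le (h : ∀ n, (u (n + 1))⁻¹ ≤ (u n)⁻¹ + D) (n : ℕ) :
    (u n)⁻¹ ≤ (u 0)⁻¹ + n * D := by
  induction n with
  | zero => simp
  | succ n ih => push_cast; linarith [h n]

lemma not_summable_of_inv_succ_le_inv_add (hpos : ∀ n, 0 < u n)
    (h : ∀ n, (u (n + 1))⁻¹ ≤ (u n)⁻¹ + D) : ¬ Summable u := by
  set K := (u 0)⁻¹ + |D|
  have hK : 0 < K := by have := hpos 0; positivity
  have hlower : ∀ n : ℕ, K⁻¹ * (1 / ((n : ℝ) + 1)) ≤ u n := by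
    intro n
    have hinv : (u n)⁻¹ ≤ K * ((n : ℝ) + 1) := calc
      (u n)⁻¹ ≤ (u 0)⁻¹ + n * D := inv_le_inv_zero_add_mul_of_inv_succ_le h n
      _ ≤ (u 0)⁻¹ + n * |D| := by gcongr; exact le_abs_self D
      _ ≤ K * ((n : ℝ) + 1) := by
        have : 0 ≤ (u 0)⁻¹ * n := by have := hpos 0; positivity
        simp only [K]; nlinarith [abs_nonneg D]
    rw [one_div, ← mul_inv]
    exact inv_le_of_inv_le₀ (hpos n) hinv
  intro hu
  have hharm : Summable fun n : ℕ => 1 / ((n : ℝ) + 1) :=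
    (summable_mul_left_iff (inv_ne_zero hK.ne')).mp
      (hu.of_nonneg_of_le (fun n => by positivity) hlower)
  exact Real.not_summable_one_div_natCast
    ((summable_nat_add_iff 1).mp (by exact_mod_cast hharm))

end InverseGrowth

/-- If positive reals `u_n → 0` satisfy `u_{n+1}² + C u_{n+1}³ ≥ u_n² − C u_n³`,
then `∑ u_n = ∞`. -/
theorem gap_sequence_not_summable
    (C : ℝ) (hC : 0 < C) (u : ℕ → ℝ)
    (hpos : ∀ n, 0 < u n)
    (hlim : Filter.Tendsto u Filter.atTop (nhds 0))
    (hrec : ∀ n, (u n)^2 - C * (u n)^3 ≤ (u (n+1))^2 + C * (u (n+1))^3) :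
    Filter.Tendsto (fun N => ∑ n ∈ Finset.range N, u n)
      Filter.atTop Filter.atTop := by
  have hsmall : ∀ᶠ n in atTop, C * u n ≤ 1 / 2 := by
    have : Tendsto (fun n => C * u n) atTop (𝓝 0) := by simpa using hlim.const_mul C
    exact this.eventually (ge_mem_nhds (by norm_num))
  obtain ⟨N, hN⟩ := eventually_atTop.mp hsmall
  rw [← not_summable_iff_tendsto_nat_atTop_of_nonneg fun n => (hpos n).le,
    ← summable_nat_add_iff N]
  refine not_summable_of_inv_succ_le_inv_add (D := 2 * C) (fun n => hpos _) fun n => ?_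
  rw [add_right_comm]
  exact inv_le_inv_add_of_sq_sub_cube_le_sq_add_cube hC.le (hpos _) (hpos _)
    (hN _ (Nat.le_add_left N n)) (hrec _)
end

section
/- Let C > 0 and h(u) = u² + C u³ for u ≥ 0, and let h⁻¹ denote the inverse of h restricted to [0, ∞). Then h⁻¹(z) = √z − (C/2) z + o(z) as z → 0⁺; that is, (h⁻¹(z) − √z + (C/2) z)/z → 0 as z → 0⁺. -/
/-!
Put `u = h⁻¹(z)`, so `z = u² (1 + C u)` and `√z = u √(1 + C u)`. Expanding
`√(1 + t) = 1 + t/2 + O(t²)` gives `h⁻¹(z) - √z + (C/2) z = O(u³)`, and `u³ ≤ z √z`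
because `u² ≤ z`.
-/

open Filter Topology

namespace Real

lemma sqrt_one_add_le_one_add_half {t : ℝ} (ht : -1 ≤ t) : √(1 + t) ≤ 1 + t / 2 := by
  have hs : √(1 + t) ^ 2 = 1 + t := sq_sqrt (by linarith)
  nlinarith [sq_nonneg (√(1 + t) - 1)]

lemma one_add_half_sub_sqrt_one_add_le {t : ℝ} (ht : 0 ≤ t) :
    1 + t / 2 - √(1 + t) ≤ t ^ 2 / 8 := by
  set s := √(1 + t)
  have hs : s ^ 2 = 1 + t := sq_sqrt (by linarith)
  have hs1 : 1 ≤ s := one_le_sqrt.mpr (by linarith)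
  -- with `t = s² - 1` the claim reads `(s - 1)² / 2 ≤ (s - 1)² (s + 1)² / 8`
  nlinarith [mul_nonneg (sq_nonneg (s - 1)) (by nlinarith : (0 : ℝ) ≤ (s + 1) ^ 2 - 4)]

end Real

section CubicPerturbation

variable {C u : ℝ}

lemma sqrt_sq_add_mul_pow_three (hu : 0 ≤ u) :
    √(u ^ 2 + C * u ^ 3) = u * √(1 + C * u) := by
  rw [show u ^ 2 + C * u ^ 3 = u ^ 2 * (1 + C * u) by ring,
    Real.sqrt_mul (sq_nonneg u), Real.sqrt_sq hu]

lemma sq_le_sq_add_mul_pow_three (hC : 0 ≤ C) (hu : 0 ≤ u) : u ^ 2 ≤ u ^ 2 + C * u ^ 3 :=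
  le_add_of_nonneg_right (by positivity)

lemma le_sqrt_sq_add_mul_pow_three (hC : 0 ≤ C) (hu : 0 ≤ u) : u ≤ √(u ^ 2 + C * u ^ 3) :=
  (Real.le_sqrt hu (by positivity)).mpr (sq_le_sq_add_mul_pow_three hC hu)

lemma abs_sub_sqrt_add_half_mul_le (hC : 0 ≤ C) (hu : 0 ≤ u) :
    |u - √(u ^ 2 + C * u ^ 3) + C / 2 * (u ^ 2 + C * u ^ 3)| ≤ 5 * C ^ 2 / 8 * u ^ 3 := by
  have hCu : 0 ≤ C * u := mul_nonneg hC hu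
  have hlow := Real.sqrt_one_add_le_one_add_half (t := C * u) (by linarith)
  have hup := Real.one_add_half_sub_sqrt_one_add_le hCu
  have hsplit : u - √(u ^ 2 + C * u ^ 3) + C / 2 * (u ^ 2 + C * u ^ 3)
      = u * (1 + C * u / 2 - √(1 + C * u)) + C ^ 2 / 2 * u ^ 3 := by
    rw [sqrt_sq_add_mul_pow_three hu]; ring
  rw [hsplit, abs_of_nonneg (add_nonneg (mul_nonneg hu (by linarith)) (by positivity))]
  calc u * (1 + C * u / 2 - √(1 + C * u)) + C ^ 2 / 2 * u ^ 3
      ≤ u * ((C * u) ^ 2 / 8) + C ^ 2 / 2 * u ^ 3 := by gcongr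
    _ = 5 * C ^ 2 / 8 * u ^ 3 := by ring

end CubicPerturbation

/-- Asymptotic expansion `h⁻¹(z) = √z − (C/2) z + o(z)` as `z → 0⁺` for the
inverse of `h(u) = u² + C u³` on `[0,∞)`. -/
theorem inverse_of_cubic_perturbation_asymptotics
    (C : ℝ) (hC : 0 < C) (hinv : ℝ → ℝ)
    (hinv_nonneg : ∀ z ≥ (0:ℝ), 0 ≤ hinv z)
    (hinv_right : ∀ z ≥ (0:ℝ), (hinv z)^2 + C * (hinv z)^3 = z) :
    Filter.Tendsto (fun z => (hinv z - Real.sqrt z + C / 2 * z) / z)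
      (nhdsWithin 0 (Set.Ioi 0)) (nhds 0) := by
  have hsqrt : Tendsto (fun z : ℝ => 5 * C ^ 2 / 8 * √z) (𝓝[>] 0) (𝓝 0) := by
    simpa using ((Real.continuous_sqrt.tendsto 0).const_mul (5 * C ^ 2 / 8)).mono_left
      nhdsWithin_le_nhds
  refine squeeze_zero_norm' ?_ hsqrt
  filter_upwards [self_mem_nhdsWithin] with z (hz : 0 < z)
  have hu := hinv_nonneg z hz.le
  have hz_eq := hinv_right z hz.le
  generalize hinv z = u at hu hz_eq ⊢
  subst hz_eq
  rw [Real.norm_eq_abs, abs_div, abs_of_pos hz, div_le_iff₀ hz]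
  calc _ ≤ 5 * C ^ 2 / 8 * u ^ 3 := abs_sub_sqrt_add_half_mul_le hC.le hu
    _ = 5 * C ^ 2 / 8 * (u * u ^ 2) := by ring
    _ ≤ _ := by
      rw [mul_assoc]
      gcongr
      exacts [le_sqrt_sq_add_mul_pow_three hC.le hu, sq_le_sq_add_mul_pow_three hC.le hu]
end

section
/- Let y₁ ∈ ℝ and let f, g : [y₁, ∞) → ℝ be C² with f'' < 0 and g'' < 0 on [y₁, ∞), and with f'' and g'' locally Lipschitz. Suppose (y_n)_{n≥1} is a strictly increasing sequence in [y₁, ∞) such that for every n ≥ 1: (a) the tangent lines of f at y_{2n−1} and at y_{2n+1} intersect at abscissa y_{2n}, i.e. f(y_{2n−1}) + f'(y_{2n−1})(y_{2n} − y_{2n−1}) = f(y_{2n+1}) + f'(y_{2n+1})(y_{2n} − y_{2n+1}); and (b) the tangent lines of g at y_{2n} and at y_{2n+2} intersect at abscissa y_{2n+1}. Then the sequence (y_n) is unbounded, i.e. sup_n y_n = ∞. -/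
/-!
If the thresholds were bounded they would increase to a limit `L`. Near `L` the second
derivatives are `≤ -m < 0` and `K`-Lipschitz, and then the tangents at `a < b` meet within
`K (b - a)² / (4m)` of the midpoint `(a + b) / 2`. So the gaps `d n = y (n + 1) - y n` satisfy
`|d (n + 1) - d n| = O((d n + d (n + 1))²)`, whence `d (n + 1) ≥ d n (1 - B d n)`. Far enough
out, `B ∑ d n ≤ B (L - y N)` is small, so the product `∏ (1 - B d n)` stays above `1 / 2`: the
gaps are bounded below and the sequence cannot stay below `L`.
-/

open Set Filter Topology

def IsTangentIntersection (h h' : ℝ → ℝ) (a b x : ℝ) : Prop :=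
  h a + h' a * (x - a) = h b + h' b * (x - b)

theorem image_sub_le_mul_sub_of_hasDerivWithinAt_le {h h' : ℝ → ℝ} {a b C : ℝ} (hab : a ≤ b)
    (hd : ∀ s ∈ Icc a b, HasDerivWithinAt h (h' s) (Icc a b) s) (hle : ∀ s ∈ Icc a b, h' s ≤ C) :
    h b - h a ≤ C * (b - a) := by
  have hB : ∀ s, HasDerivWithinAt (fun s => h a + C * (s - a)) C (Ici s) s := fun s =>
    (((hasDerivAt_id s).sub_const a).const_mul C |>.const_add (h a)).hasDerivWithinAt.congr_deriv
      (by simp)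
  have := image_le_of_deriv_right_le_deriv_boundary (fun s hs => (hd s hs).continuousWithinAt)
    (fun s hs => (hd s (Ico_subset_Icc_self hs)).mono_of_mem_nhdsWithin (Icc_mem_nhdsGE_of_mem hs))
    (by simp) (by fun_prop) (fun s _ => hB s) (fun s hs => hle s (Ico_subset_Icc_self hs))
    (right_mem_Icc.2 hab)
  linarith

theorem abs_sub_midpoint_le_of_isTangentIntersection {h h' h'' : ℝ → ℝ} {a b x m : ℝ}
    {K : NNReal} (hab : a < b) (hm : 0 < m)
    (hd1 : ∀ s ∈ Icc a b, HasDerivWithinAt h (h' s) (Icc a b) s)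
    (hd2 : ∀ s ∈ Icc a b, HasDerivWithinAt h' (h'' s) (Icc a b) s)
    (hneg : ∀ s ∈ Icc a b, h'' s ≤ -m) (hK : LipschitzOnWith K h'' (Icc a b))
    (ht : IsTangentIntersection h h' a b x) :
    |x - (a + b) / 2| ≤ K / (4 * m) * (b - a) ^ 2 := by
  set c := (a + b) / 2 with hc_def
  have hc : c ∈ Icc a b := ⟨by linarith, by linarith⟩
  -- chosen so that `ψ'` vanishes at `c` and `ψ b - ψ a = (x - c) * (h' a - h' b)`
  set ψ : ℝ → ℝ := fun s => h' s * (c - s) + h s + h'' c * (s - c) ^ 2 / 2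
  have hψ : ∀ s ∈ Icc a b, HasDerivWithinAt ψ ((h'' s - h'' c) * (c - s)) (Icc a b) s := by
    intro s hs
    have := (((hd2 s hs).mul ((hasDerivWithinAt_id s _).const_sub c)).add (hd1 s hs)).add
      ((((hasDerivWithinAt_id s _).sub_const c).pow 2).const_mul (h'' c) |>.div_const 2)
    exact this.congr_deriv (by simp only [id_eq]; ring)
  have hψ_le : ∀ s ∈ Ico a b, ‖(h'' s - h'' c) * (c - s)‖ ≤ K * ((b - a) / 2) ^ 2 := by
    intro s hs
    have hs' := Ico_subset_Icc_self hs
    have hcs : |c - s| ≤ (b - a) / 2 := abs_le.2 ⟨by linarith [hs'.2], by linarith [hs'.1]⟩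
    have hL : |h'' s - h'' c| ≤ K * |s - c| := by
      simpa [Real.dist_eq] using hK.dist_le_mul s hs' c hc
    rw [abs_sub_comm s c] at hL
    rw [Real.norm_eq_abs, abs_mul]
    calc |h'' s - h'' c| * |c - s| ≤ K * |c - s| * |c - s| := by gcongr
      _ ≤ K * ((b - a) / 2) * ((b - a) / 2) := by gcongr
      _ = _ := by ring
  have hψab := norm_image_sub_le_of_norm_deriv_le_segment' hψ hψ_le b (right_mem_Icc.2 hab.le)
  have hslope := image_sub_le_mul_sub_of_hasDerivWithinAt_le hab.le hd2 hneg
  have hid : (x - c) * (h' a - h' b) = ψ b - ψ a := by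
    simp only [ψ, c]; unfold IsTangentIntersection at ht; linear_combination ht
  have hD : 0 < h' a - h' b := by nlinarith
  rw [Real.norm_eq_abs, ← hid, abs_mul, abs_of_pos hD] at hψab
  rw [div_mul_eq_mul_div, le_div_iff₀ (by positivity)]
  nlinarith [abs_nonneg (x - c)]

theorem exists_abs_sub_midpoint_le_sq_of_isTangentIntersection {s : Set ℝ} {h h' h'' : ℝ → ℝ}
    {L : ℝ} (hd1 : ∀ t ∈ s, HasDerivWithinAt h (h' t) s t)
    (hd2 : ∀ t ∈ s, HasDerivWithinAt h' (h'' t) s t) (hL : L ∈ s) (hneg : h'' L < 0)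
    (hlip : ∃ ε > 0, ∃ K : NNReal, LipschitzOnWith K h'' (Icc (L - ε) (L + ε) ∩ s)) :
    ∃ δ > 0, ∃ C ≥ 0, ∀ a b x, Icc a b ⊆ s → L - δ ≤ a → a < b → b ≤ L + δ →
      IsTangentIntersection h h' a b x → |x - (a + b) / 2| ≤ C * (b - a) ^ 2 := by
  obtain ⟨ε, hε, K, hK⟩ := hlip
  set m := -h'' L / 2 with hm_def
  have hm : 0 < m := by linarith
  refine ⟨min ε (m / (K + 1)), by positivity, K / (4 * m), by positivity, ?_⟩
  intro a b x hs ha hab hb ht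
  have hδε := min_le_left ε (m / (K + 1))
  have hδm := min_le_right ε (m / (K + 1))
  have hsub : Icc a b ⊆ Icc (L - ε) (L + ε) ∩ s := fun t ht =>
    ⟨⟨by linarith [ht.1], by linarith [ht.2]⟩, hs ht⟩
  have hLmem : L ∈ Icc (L - ε) (L + ε) ∩ s := ⟨⟨by linarith, by linarith⟩, hL⟩
  -- the Lipschitz bound keeps `h''` below `h'' L / 2` within `m / (K + 1)` of `L`
  have hneg' : ∀ t ∈ Icc a b, h'' t ≤ -m := by
    intro t ht
    have hdist : |h'' t - h'' L| ≤ K * |t - L| := by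
      simpa [Real.dist_eq] using hK.dist_le_mul t (hsub ht) L hLmem
    have htL : |t - L| ≤ m / (K + 1) := abs_le.2 ⟨by linarith [ht.1], by linarith [ht.2]⟩
    have : (K : ℝ) * (m / (K + 1)) ≤ m := by
      rw [mul_div_assoc', div_le_iff₀ (by positivity)]; nlinarith
    nlinarith [abs_le.1 hdist, mul_le_mul_of_nonneg_left htL K.coe_nonneg]
  exact abs_sub_midpoint_le_of_isTangentIntersection hab hm
    (fun t ht => (hd1 t (hs ht)).mono hs) (fun t ht => (hd2 t (hs ht)).mono hs) hneg'
    (hK.mono hsub) ht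

theorem mul_one_sub_le_of_abs_sub_le_sq {C p q : ℝ} (hC : 0 ≤ C) (hp : 0 ≤ p) (hq : 0 ≤ q)
    (hsmall : C * (p + q) ≤ 1 / 4) (h : |q - p| ≤ C * (p + q) ^ 2) :
    p * (1 - 8 * C * p) ≤ q := by
  obtain ⟨hlow, hup⟩ := abs_le.1 h
  have hq' : q ≤ 5 / 3 * p := by nlinarith
  have hpq : (p + q) ^ 2 ≤ 8 * p ^ 2 := by nlinarith
  nlinarith [mul_le_mul_of_nonneg_left hpq hC]

theorem mul_one_sub_le_sub_succ {y : ℕ → ℝ} {B : ℝ} (hy : Monotone y) (hB : 0 ≤ B)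
    (hsmall : ∀ n, B * (y n - y 0) ≤ 1)
    (hstep : ∀ n, (y (n + 1) - y n) * (1 - B * (y (n + 1) - y n)) ≤ y (n + 2) - y (n + 1)) :
    ∀ n, (y 1 - y 0) * (1 - B * (y n - y 0)) ≤ y (n + 1) - y n := by
  intro n
  induction n with
  | zero => simp
  | succ n ih =>
    have hd0 : 0 ≤ y 1 - y 0 := sub_nonneg.2 (hy (Nat.zero_le 1))
    have hdn : 0 ≤ y (n + 1) - y n := sub_nonneg.2 (hy n.le_succ)
    have hSn : 0 ≤ y n - y 0 := sub_nonneg.2 (hy n.zero_le)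
    have hfac : 0 ≤ 1 - B * (y (n + 1) - y n) := by
      nlinarith [hsmall (n + 1), mul_nonneg hB hSn]
    calc (y 1 - y 0) * (1 - B * (y (n + 1) - y 0))
        ≤ (y 1 - y 0) * (1 - B * (y n - y 0)) * (1 - B * (y (n + 1) - y n)) := by
          nlinarith [mul_nonneg (mul_nonneg hd0 (mul_nonneg hB hSn)) (mul_nonneg hB hdn)]
      _ ≤ (y (n + 1) - y n) * (1 - B * (y (n + 1) - y n)) := by gcongr
      _ ≤ y (n + 1 + 1) - y (n + 1) := hstep n

theorem exists_lt_of_abs_sub_midpoint_le_sq {y : ℕ → ℝ} {C L : ℝ} (hy : StrictMono y)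
    (hC : 0 ≤ C) (hL : 32 * C * (L - y 0) ≤ 1)
    (hmid : ∀ n, |y (n + 1) - (y n + y (n + 2)) / 2| ≤ C * (y (n + 2) - y n) ^ 2) :
    ∃ n, L < y n := by
  by_contra! hle
  have hd : ∀ n, 0 ≤ y (n + 1) - y n := fun n => sub_nonneg.2 (hy.monotone n.le_succ)
  have hspan : ∀ n, y n - y 0 ≤ L - y 0 := fun n => by linarith [hle n]
  have hstep : ∀ n, (y (n + 1) - y n) * (1 - 16 * C * (y (n + 1) - y n)) ≤
      y (n + 2) - y (n + 1) := by
    intro n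
    have hsecond : |(y (n + 2) - y (n + 1)) - (y (n + 1) - y n)| ≤
        2 * C * ((y (n + 1) - y n) + (y (n + 2) - y (n + 1))) ^ 2 := by
      calc |(y (n + 2) - y (n + 1)) - (y (n + 1) - y n)|
          = 2 * |y (n + 1) - (y n + y (n + 2)) / 2| := by
            rw [← abs_two, ← abs_mul, ← abs_neg]; ring_nf
        _ ≤ 2 * C * (y (n + 2) - y n) ^ 2 := by linarith [hmid n]
        _ = 2 * C * ((y (n + 1) - y n) + (y (n + 2) - y (n + 1))) ^ 2 := by ring
    have hsmall : 2 * C * ((y (n + 1) - y n) + (y (n + 2) - y (n + 1))) ≤ 1 / 4 := by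
      nlinarith [hspan (n + 2), hy.monotone n.zero_le]
    have := mul_one_sub_le_of_abs_sub_le_sq (by positivity) (hd n) (hd (n + 1)) hsmall hsecond
    linarith
  have hgap : ∀ n, (y 1 - y 0) / 2 ≤ y (n + 1) - y n := by
    intro n
    have hhalf : 16 * C * (y n - y 0) ≤ 1 / 2 := by nlinarith [hspan n]
    calc (y 1 - y 0) / 2 ≤ (y 1 - y 0) * (1 - 16 * C * (y n - y 0)) := by nlinarith [hd 0]
      _ ≤ y (n + 1) - y n := mul_one_sub_le_sub_succ hy.monotone (by positivity)
          (fun n => by nlinarith [hspan n]) hstep n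
  have hlin : ∀ n : ℕ, y 0 + n * ((y 1 - y 0) / 2) ≤ y n := by
    intro n
    induction n with
    | zero => simp
    | succ n ih => push_cast; linarith [hgap n]
  have hd0 : 0 < (y 1 - y 0) / 2 := by linarith [hy Nat.zero_lt_one]
  obtain ⟨n, hn⟩ := exists_nat_gt ((L - y 0) / ((y 1 - y 0) / 2))
  rw [div_lt_iff₀ hd0] at hn
  linarith [hlin n, hle n]

theorem isTangentIntersection_of_alternating {f f' g g' : ℝ → ℝ} {y : ℕ → ℝ}
    (ha : ∀ n, 1 ≤ n → IsTangentIntersection f f' (y (2 * n - 1)) (y (2 * n + 1)) (y (2 * n)))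
    (hb : ∀ n, 1 ≤ n → IsTangentIntersection g g' (y (2 * n)) (y (2 * n + 2)) (y (2 * n + 1)))
    {k : ℕ} (hk : 1 ≤ k) :
    IsTangentIntersection f f' (y k) (y (k + 2)) (y (k + 1)) ∨
      IsTangentIntersection g g' (y k) (y (k + 2)) (y (k + 1)) := by
  obtain ⟨n, rfl | rfl⟩ := Nat.even_or_odd' k
  · exact .inr (hb n (by omega))
  · have := ha (n + 1) (by omega)
    rw [show 2 * (n + 1) - 1 = 2 * n + 1 by omega, show 2 * (n + 1) + 1 = 2 * n + 1 + 2 by omega,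
      show 2 * (n + 1) = 2 * n + 1 + 1 by omega] at this
    exact .inl this

theorem tangency_recursion_unbounded_general
    (y₁ : ℝ) (f f' f'' g g' g'' : ℝ → ℝ)
    (hf1 : ∀ x ∈ Set.Ici y₁, HasDerivWithinAt f (f' x) (Set.Ici y₁) x)
    (hf2 : ∀ x ∈ Set.Ici y₁, HasDerivWithinAt f' (f'' x) (Set.Ici y₁) x)
    (hg1 : ∀ x ∈ Set.Ici y₁, HasDerivWithinAt g (g' x) (Set.Ici y₁) x)
    (hg2 : ∀ x ∈ Set.Ici y₁, HasDerivWithinAt g' (g'' x) (Set.Ici y₁) x)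
    (hfneg : ∀ x ∈ Set.Ici y₁, f'' x < 0)
    (hgneg : ∀ x ∈ Set.Ici y₁, g'' x < 0)
    (hfL : ∀ x ∈ Set.Ici y₁, ∃ ε > (0:ℝ), ∃ K : NNReal,
      LipschitzOnWith K f'' (Set.Icc (x - ε) (x + ε) ∩ Set.Ici y₁))
    (hgL : ∀ x ∈ Set.Ici y₁, ∃ ε > (0:ℝ), ∃ K : NNReal,
      LipschitzOnWith K g'' (Set.Icc (x - ε) (x + ε) ∩ Set.Ici y₁))
    (y : ℕ → ℝ)
    (hmem : ∀ n, 1 ≤ n → y₁ ≤ y n)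
    (hmono : ∀ n, 1 ≤ n → y n < y (n + 1))
    (ha : ∀ n : ℕ, 1 ≤ n →
      f (y (2*n - 1)) + f' (y (2*n - 1)) * (y (2*n) - y (2*n - 1))
        = f (y (2*n + 1)) + f' (y (2*n + 1)) * (y (2*n) - y (2*n + 1)))
    (hb : ∀ n : ℕ, 1 ≤ n →
      g (y (2*n)) + g' (y (2*n)) * (y (2*n + 1) - y (2*n))
        = g (y (2*n + 2)) + g' (y (2*n + 2)) * (y (2*n + 1) - y (2*n + 2))) :
    ∀ M : ℝ, ∃ n : ℕ, M < y n := by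
  by_contra! ⟨M, hM⟩
  set z : ℕ → ℝ := fun n => y (n + 1)
  have hz : StrictMono z := strictMono_nat_of_lt_succ fun n => hmono (n + 1) (by omega)
  have hzbdd : BddAbove (Set.range z) := ⟨M, by rintro _ ⟨n, rfl⟩; exact hM (n + 1)⟩
  set L := ⨆ n, z n
  have hzL : ∀ n, z n ≤ L := le_ciSup hzbdd
  have hL : L ∈ Ici y₁ := (hmem 1 le_rfl).trans (hzL 0)
  obtain ⟨δf, hδf, Cf, hCf, hf⟩ := exists_abs_sub_midpoint_le_sq_of_isTangentIntersection
    hf1 hf2 hL (hfneg L hL) (hfL L hL)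
  obtain ⟨δg, hδg, Cg, hCg, hg⟩ := exists_abs_sub_midpoint_le_sq_of_isTangentIntersection
    hg1 hg2 hL (hgneg L hL) (hgL L hL)
  set δ := min δf δg
  set C := max Cf Cg
  obtain ⟨N, hNδ, hNC⟩ : ∃ N, L - δ < z N ∧ 32 * C * (L - z N) < 1 := by
    have htend : Tendsto z atTop (𝓝 L) := tendsto_atTop_ciSup hz.monotone hzbdd
    have hnear := htend.eventually (lt_mem_nhds (by linarith [lt_min hδf hδg] : L - δ < L))
    have hsmall := (tendsto_const_nhds.mul (tendsto_const_nhds.sub htend)).eventually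
      (gt_mem_nhds (by simp : 32 * C * (L - L) < 1))
    exact (hnear.and hsmall).exists
  have hmid : ∀ k, N ≤ k → |z (k + 1) - (z k + z (k + 2)) / 2| ≤ C * (z (k + 2) - z k) ^ 2 := by
    intro k hk
    have hab : z k < z (k + 2) := hz (by omega)
    have hsub : Icc (z k) (z (k + 2)) ⊆ Ici y₁ := fun t ht => (hmem _ (by omega)).trans ht.1
    have haL : L - δ ≤ z k := hNδ.le.trans (hz.monotone hk)
    have hbL : z (k + 2) ≤ L := hzL (k + 2)
    rcases isTangentIntersection_of_alternating ha hb (k := k + 1) (by omega) with ht | ht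
    · exact (hf _ _ _ hsub (by linarith [min_le_left δf δg]) hab (by linarith) ht).trans
        (by gcongr; exact le_max_left _ _)
    · exact (hg _ _ _ hsub (by linarith [min_le_right δf δg]) hab (by linarith) ht).trans
        (by gcongr; exact le_max_right _ _)
  obtain ⟨j, hj⟩ := exists_lt_of_abs_sub_midpoint_le_sq (y := fun j => z (N + j))
    (fun _ _ hij => hz (by omega)) (le_max_of_le_left hCf) hNC.le fun j => hmid (N + j) (by omega)
  exact (hzL (N + j)).not_gt hj

/-- The intertwined tangency-point recursion for two strictly concave C²
functions with locally Lipschitz second derivatives cannot stay bounded: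
the sequence of thresholds is unbounded. -/
theorem tangency_recursion_unbounded
    (y₁ : ℝ) (f f' f'' g g' g'' : ℝ → ℝ)
    (hf1 : ∀ x ∈ Set.Ici y₁, HasDerivWithinAt f (f' x) (Set.Ici y₁) x)
    (hf2 : ∀ x ∈ Set.Ici y₁, HasDerivWithinAt f' (f'' x) (Set.Ici y₁) x)
    (hg1 : ∀ x ∈ Set.Ici y₁, HasDerivWithinAt g (g' x) (Set.Ici y₁) x)
    (hg2 : ∀ x ∈ Set.Ici y₁, HasDerivWithinAt g' (g'' x) (Set.Ici y₁) x)
    (hf2c : ContinuousOn f'' (Set.Ici y₁))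
    (hg2c : ContinuousOn g'' (Set.Ici y₁))
    (hfneg : ∀ x ∈ Set.Ici y₁, f'' x < 0)
    (hgneg : ∀ x ∈ Set.Ici y₁, g'' x < 0)
    (hfL : ∀ x ∈ Set.Ici y₁, ∃ ε > (0:ℝ), ∃ K : NNReal,
      LipschitzOnWith K f'' (Set.Icc (x - ε) (x + ε) ∩ Set.Ici y₁))
    (hgL : ∀ x ∈ Set.Ici y₁, ∃ ε > (0:ℝ), ∃ K : NNReal,
      LipschitzOnWith K g'' (Set.Icc (x - ε) (x + ε) ∩ Set.Ici y₁))
    (y : ℕ → ℝ)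
    (hy1 : y 1 = y₁)
    (hmem : ∀ n, 1 ≤ n → y₁ ≤ y n)
    (hmono : ∀ n, 1 ≤ n → y n < y (n + 1))
    (ha : ∀ n : ℕ, 1 ≤ n →
      f (y (2*n - 1)) + f' (y (2*n - 1)) * (y (2*n) - y (2*n - 1))
        = f (y (2*n + 1)) + f' (y (2*n + 1)) * (y (2*n) - y (2*n + 1)))
    (hb : ∀ n : ℕ, 1 ≤ n →
      g (y (2*n)) + g' (y (2*n)) * (y (2*n + 1) - y (2*n))
        = g (y (2*n + 2)) + g' (y (2*n + 2)) * (y (2*n + 1) - y (2*n + 2))) :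
    ∀ M : ℝ, ∃ n : ℕ, M < y n :=
  tangency_recursion_unbounded_general y₁ f f' f'' g g' g'' hf1 hf2 hg1 hg2 hfneg hgneg hfL hgL y
    hmem hmono ha hb
end

section
/- Let m > 1 and ρ < 0 be real numbers, and set θ = ((1 − m^ρ)/((−ρ)(m − 1)))^{1/(1−ρ)}. Then 1/m < θ < 1. -/
/-! Both bounds are instances of Bernoulli's inequality `1 + ρ (x - 1) < x ^ ρ` for a negative
exponent: at `x = m` it gives `1 - m ^ ρ < (-ρ) (m - 1)`, and at `x = 1 / m`, after multiplying
by `m ^ ρ`, it gives `m ^ (ρ - 1) (-ρ) (m - 1) < 1 - m ^ ρ`. So the base of `θ` lies strictly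
between `m ^ (ρ - 1)` and `1`, and raising to the power `1 / (1 - ρ)` sends these to `1 / m`
and `1`. -/

open Real

lemma one_add_mul_sub_one_lt_rpow_of_neg {x p : ℝ} (hx : 0 < x) (hx1 : x ≠ 1) (hp : p < 0) :
    1 + p * (x - 1) < x ^ p := by
  have hlog : log x < x - 1 := log_lt_sub_one_of_pos hx hx1
  have hlog0 : log x ≠ 0 := log_ne_zero_of_pos_of_ne_one hx hx1
  calc 1 + p * (x - 1) < 1 + p * log x := by linarith [mul_lt_mul_of_neg_left hlog hp]
    _ < exp (log x * p) := by linarith [add_one_lt_exp (mul_ne_zero hlog0 hp.ne)]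
    _ = x ^ p := (rpow_def_of_pos hx p).symm

lemma rpow_sub_one_mul_lt_one_sub_rpow_of_neg {x p : ℝ} (hx : 0 < x) (hx1 : x ≠ 1)
    (hp : p < 0) : x ^ (p - 1) * (-p * (x - 1)) < 1 - x ^ p := by
  have hbern : 1 + p * (x⁻¹ - 1) < (x ^ p)⁻¹ := by
    simpa only [inv_rpow hx.le] using
      one_add_mul_sub_one_lt_rpow_of_neg (inv_pos.mpr hx) (inv_ne_one.mpr hx1) hp
  have hxp : 0 < x ^ p := rpow_pos_of_pos hx p
  have hscaled := mul_lt_mul_of_pos_left hbern hxp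
  rw [mul_inv_cancel₀ hxp.ne'] at hscaled
  have hsub : x ^ (p - 1) = x ^ p * x⁻¹ := by rw [rpow_sub_one hx.ne', div_eq_mul_inv]
  have hcancel : x ^ p * x⁻¹ * x = x ^ p := by field_simp
  rw [hsub]
  linear_combination hscaled - p * hcancel

/-- For `m > 1` and `ρ < 0`, `θ = ((1 − m^ρ)/((−ρ)(m−1)))^{1/(1−ρ)}`
satisfies `1/m < θ < 1`. -/
theorem theta_bounds
    (m ρ : ℝ) (hm : 1 < m) (hρ : ρ < 0) :
    1/m < ((1 - m ^ ρ) / ((-ρ) * (m - 1))) ^ (1/(1 - ρ)) ∧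
    ((1 - m ^ ρ) / ((-ρ) * (m - 1))) ^ (1/(1 - ρ)) < 1 := by
  have hm0 : 0 < m := by linarith
  have hden : 0 < (-ρ) * (m - 1) := mul_pos (by linarith) (by linarith)
  have hρ1 : 0 < 1 - ρ := by linarith
  have hexp : 0 < 1 / (1 - ρ) := one_div_pos.mpr hρ1
  have hupper : (1 - m ^ ρ) / ((-ρ) * (m - 1)) < 1 := by
    rw [div_lt_one hden]
    linarith [one_add_mul_sub_one_lt_rpow_of_neg hm0 hm.ne' hρ]
  have hlower : m ^ (ρ - 1) < (1 - m ^ ρ) / ((-ρ) * (m - 1)) :=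
    (lt_div_iff₀ hden).mpr (rpow_sub_one_mul_lt_one_sub_rpow_of_neg hm0 hm.ne' hρ)
  have hinv : (m ^ (ρ - 1)) ^ (1 / (1 - ρ)) = 1 / m := by
    rw [← rpow_mul hm0.le, show (ρ - 1) * (1 / (1 - ρ)) = -1 by field_simp [hρ1.ne']; ring,
      rpow_neg_one, one_div]
  constructor
  · calc 1 / m = (m ^ (ρ - 1)) ^ (1 / (1 - ρ)) := hinv.symm
      _ < _ := rpow_lt_rpow (rpow_pos_of_pos hm0 _).le hlower hexp
  · exact rpow_lt_one (hlower.trans' (rpow_pos_of_pos hm0 _)).le hupper hexp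
end

section
/- Let 0 < l¹ ≤ l², let ρ⁻ < 0 < 1 < ρ⁺ with γ = ρ⁺ − ρ⁻ > 0, let 0 < θ < 1, and let x̄ > 0. Define B = (ρ⁻ x̄^{−ρ⁺} / γ)(θ l¹ − l²) and C = (ρ⁺ x̄^{−ρ⁻} / γ)(l² − θ ((ρ⁺ − 1)/ρ⁺)(ρ⁻/(ρ⁻ − 1)) l¹). Then B > 0 and C > 0. -/
/-! Both signs come down to `0 < l² - κ l¹` for a constant `κ < 1`: for `B` the constant is
`θ` (and the prefactor is negative since `ρ⁻ < 0`), for `C` it is `θ · (ρ⁺ - 1)/ρ⁺ · ρ⁻/(ρ⁻ - 1)`,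
a product of three numbers in `(0, 1)`. -/

open Set

lemma sub_one_div_mem_Ioo {ρ : ℝ} (hρ : 1 < ρ) : (ρ - 1) / ρ ∈ Ioo 0 1 :=
  ⟨div_pos (by linarith) (by linarith), (div_lt_one (by linarith)).2 (by linarith)⟩

lemma div_sub_one_mem_Ioo {ρ : ℝ} (hρ : ρ < 0) : ρ / (ρ - 1) ∈ Ioo 0 1 :=
  ⟨div_pos_of_neg_of_neg hρ (by linarith), (div_lt_one_of_neg (by linarith)).2 (by linarith)⟩

lemma mul_mem_Ioo_zero_one {a b : ℝ} (ha : a ∈ Ioo 0 1) (hb : b ∈ Ioo 0 1) :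
    a * b ∈ Ioo 0 1 :=
  ⟨mul_pos ha.1 hb.1, mul_lt_one_of_nonneg_of_lt_one_left ha.1.le ha.2 hb.2.le⟩

lemma sub_mul_pos_of_lt_one {κ a b : ℝ} (hκ : κ < 1) (ha : 0 < a) (hab : a ≤ b) :
    0 < b - κ * a :=
  sub_pos.2 ((mul_lt_of_lt_one_left ha hκ).trans_le hab)

theorem tangent_solution_coefficients_pos_general
    (l1 l2 ρm ρp θ xb : ℝ)
    (hl1 : 0 < l1) (hl12 : l1 ≤ l2)
    (hρm : ρm < 0) (hρp : 1 < ρp)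
    (hθ0 : 0 < θ) (hθ1 : θ < 1) (hxb : 0 < xb) :
    0 < ρm * xb ^ (-ρp) / (ρp - ρm) * (θ * l1 - l2) ∧
    0 < ρp * xb ^ (-ρm) / (ρp - ρm)
        * (l2 - θ * ((ρp - 1)/ρp) * (ρm/(ρm - 1)) * l1) := by
  have hγ : 0 < ρp - ρm := by linarith
  have hκ : θ * ((ρp - 1) / ρp) * (ρm / (ρm - 1)) ∈ Ioo 0 1 :=
    mul_mem_Ioo_zero_one (mul_mem_Ioo_zero_one ⟨hθ0, hθ1⟩ (sub_one_div_mem_Ioo hρp))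
      (div_sub_one_mem_Ioo hρm)
  constructor
  · refine mul_pos_of_neg_of_neg ?_ (neg_pos.1 ?_)
    · exact div_neg_of_neg_of_pos (mul_neg_of_neg_of_pos hρm (Real.rpow_pos_of_pos hxb _)) hγ
    · simpa using sub_mul_pos_of_lt_one hθ1 hl1 hl12
  · exact mul_pos (div_pos (mul_pos (by linarith) (Real.rpow_pos_of_pos hxb _)) hγ)
      (sub_mul_pos_of_lt_one hκ.2 hl1 hl12)

/-- Positivity of the coefficients `B` and `C` in the representation
`T = Bψ + Cφ` of the tangent solution in the duopoly exit game. -/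
theorem tangent_solution_coefficients_pos
    (l1 l2 ρm ρp θ xb : ℝ)
    (hl1 : 0 < l1) (hl12 : l1 ≤ l2)
    (hρm : ρm < 0) (hρp : 1 < ρp)
    (hγ : 0 < ρp - ρm)
    (hθ0 : 0 < θ) (hθ1 : θ < 1) (hxb : 0 < xb) :
    0 < ρm * xb ^ (-ρp) / (ρp - ρm) * (θ * l1 - l2) ∧
    0 < ρp * xb ^ (-ρm) / (ρp - ρm)
        * (l2 - θ * ((ρp - 1)/ρp) * (ρm/(ρm - 1)) * l1) :=
  tangent_solution_coefficients_pos_general l1 l2 ρm ρp θ xb hl1 hl12 hρm hρp hθ0 hθ1 hxb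
end
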